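/- arXiv:math/9905204 — 3 statements merged into one kernel-verified Lean document; each statement's English description precedes it below -/
import Mathlib

section
/- Let φ : K^1 → ℂ be a valuation on compact intervals of ℝ (i.e. φ([a,b]∪[b,c]) + φ({b}) = φ([a,b]) + φ([b,c]) for a ≤ b ≤ c) that is continuous and polynomial of degree at most ℓ, meaning x ↦ φ([a+x, b+x]) is a polynomial of degree at most ℓ for each fixed interval [a,b]. Then there exist polynomials P, Q of degree at most ℓ+1 such that φ([a,b]) = P(a) + Q(b) for all a ≤ b. -/
/-!
By the valuation property, `φ [a, b] = φ {b} + G b - G a` for a continuous `G`, and the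
polynomiality of `φ` says that every increment `x ↦ G (x + h) - G x`, `h ≥ 0`, is a polynomial
of degree `≤ ℓ`. Choose a polynomial `q` of degree `≤ ℓ + 1` with the same unit increment as `G`.
Then `R = G - q` is `1`-periodic, so each increment of `R` is a periodic polynomial, i.e. a
constant; hence `R - R 0` is continuous and additive, thus linear, and vanishes at `1`. So `G` is
`q` up to a constant, and `φ [a, b] = -q a + (q + f) b` where `f` is the polynomial `x ↦ φ {x}`.
-/

open Polynomial

namespace Polynomial

theorem natDegree_taylor_sub_le {R : Type*} [CommRing R] {p : R[X]} {n : ℕ}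
    (hp : p.natDegree ≤ n + 1) (r : R) : (taylor r p - p).natDegree ≤ n := by
  have hle : (taylor r p - p).natDegree ≤ n + 1 :=
    (natDegree_sub_le _ _).trans (max_le ((natDegree_taylor p r).trans_le hp) hp)
  have hcoeff : (taylor r p - p).coeff (n + 1) = 0 := by
    rcases hp.eq_or_lt with hp | hp
    · rw [coeff_sub, ← hp, coeff_taylor_natDegree, leadingCoeff, sub_self]
    · rw [coeff_sub, coeff_eq_zero_of_natDegree_lt ((natDegree_taylor p r).trans_lt hp),
        coeff_eq_zero_of_natDegree_lt hp, sub_self]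
  simpa using natDegree_le_pred hle hcoeff

theorem eq_C_eval_zero_of_eval_add_one {R : Type*} [CommRing R] [IsDomain R] [CharZero R]
    {u : R[X]} (h : ∀ n : ℕ, u.eval ((n : R) + 1) = u.eval (n : R)) : u = C (u.eval 0) := by
  have hn : ∀ n : ℕ, u.eval (n : R) = u.eval 0 := by
    intro n
    induction n with
    | zero => simp
    | succ n ih => rw [Nat.cast_succ, h, ih]
  apply eq_of_infinite_eval_eq
  refine (Set.infinite_range_of_injective Nat.cast_injective).mono ?_
  rintro _ ⟨n, rfl⟩
  simp [hn n]

/-- `p ↦ taylor 1 (X * p) - X * p` is an injective, hence surjective, endomorphism of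
`degreeLE K n`: a `1`-periodic polynomial is constant, and `X * p` vanishes at `0`. -/
theorem exists_natDegree_le_taylor_one_sub_eq {K : Type*} [Field K] [CharZero K] {d : K[X]}
    {n : ℕ} (hd : d.natDegree ≤ n) : ∃ q : K[X], q.natDegree ≤ n + 1 ∧ taylor 1 q - q = d := by
  have mem_iff : ∀ {p : K[X]}, p ∈ degreeLE K n ↔ p.natDegree ≤ n := by
    simp [mem_degreeLE, natDegree_le_iff_degree_le]
  have natDegree_X_mul : ∀ p : degreeLE K n, (X * (p : K[X])).natDegree ≤ n + 1 := fun p =>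
    natDegree_mul_le.trans (by rw [natDegree_X, add_comm]; exact Nat.succ_le_succ (mem_iff.1 p.2))
  let Δ : K[X] →ₗ[K] K[X] := taylor 1 - LinearMap.id
  let Φ : degreeLE K n →ₗ[K] degreeLE K n :=
    (Δ ∘ₗ LinearMap.mulLeft K X ∘ₗ (degreeLE K n).subtype).codRestrict _
      fun p => mem_iff.2 (natDegree_taylor_sub_le (natDegree_X_mul p) 1)
  have : FiniteDimensional K (degreeLE K n) :=
    degreeLT_succ_eq_degreeLE (R := K) ▸ (degreeLTEquiv K (n + 1)).symm.finiteDimensional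
  have hΦ : Function.Injective Φ := by
    refine (injective_iff_map_eq_zero Φ).2 fun p hp => ?_
    have hΔ : taylor 1 (X * (p : K[X])) = X * (p : K[X]) := sub_eq_zero.1 (congrArg Subtype.val hp)
    have hconst := eq_C_eval_zero_of_eval_add_one (u := X * (p : K[X])) fun m => by
      simpa only [taylor_eval] using congrArg (eval (m : K)) hΔ
    rw [eval_mul, eval_X, zero_mul, C_0, mul_eq_zero] at hconst
    exact Subtype.ext (hconst.resolve_left X_ne_zero)
  obtain ⟨p, hp⟩ := LinearMap.injective_iff_surjective.1 hΦ ⟨d, mem_iff.2 hd⟩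
  exact ⟨X * (p : K[X]), natDegree_X_mul p, congrArg Subtype.val hp⟩

end Polynomial

section Increments

variable {E : Type*} [AddCommGroup E]

theorem sub_eq_sub_of_forall_nonneg {f : ℝ → E}
    (hf : ∀ h, 0 ≤ h → ∀ x, f (x + h) - f x = f h - f 0) (h x : ℝ) :
    f (x + h) - f x = f h - f 0 := by
  rcases le_total 0 h with hh | hh
  · exact hf h hh x
  · have hx := hf (-h) (neg_nonneg.2 hh) (x + h)
    have h0 := hf (-h) (neg_nonneg.2 hh) h
    rw [add_neg_cancel_right] at hx
    rw [add_neg_cancel] at h0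
    rw [← neg_sub, hx, ← h0, neg_sub]

variable [Module ℝ E] [TopologicalSpace E] [IsTopologicalAddGroup E] [ContinuousSMul ℝ E]
  [T2Space E]

/-- `x ↦ f x - f 0` is continuous and additive, hence `ℝ`-linear, and it vanishes at `1`. -/
theorem Function.Periodic.eq_of_sub_eq_sub {f : ℝ → E} (hper : Function.Periodic f 1)
    (hf : Continuous f) (hinc : ∀ h, 0 ≤ h → ∀ x, f (x + h) - f x = f h - f 0) (x : ℝ) :
    f x = f 0 := by
  let W : ℝ →+ E := AddMonoidHom.mk' (fun x => f x - f 0) fun x y => by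
    rw [add_comm x y, ← sub_add_sub_cancel (f (y + x)) (f y), sub_eq_sub_of_forall_nonneg hinc]
  have hW := map_real_smul W (hf.sub continuous_const) x 1
  simpa [W, hper.eq, sub_eq_zero] using hW

end Increments

theorem exists_eq_eval_of_forall_sub_eq_eval {G : ℝ → ℂ} (hG : Continuous G) {ℓ : ℕ}
    (hinc : ∀ h, 0 ≤ h → ∃ u : ℂ[X], u.natDegree ≤ ℓ ∧
      ∀ x : ℝ, G (x + h) - G x = u.eval (x : ℂ)) :
    ∃ q : ℂ[X], q.natDegree ≤ ℓ + 1 ∧ ∀ x : ℝ, G x = q.eval (x : ℂ) := by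
  obtain ⟨u, hu, hGu⟩ := hinc 1 zero_le_one
  obtain ⟨q, hq, hqu⟩ := exists_natDegree_le_taylor_one_sub_eq hu
  set R : ℝ → ℂ := fun x => G x - q.eval (x : ℂ) with hR_def
  have hR : Continuous R := hG.sub (q.continuous.comp Complex.continuous_ofReal)
  have hper : Function.Periodic R 1 := fun x => by
    have hx := congrArg (eval (x : ℂ)) hqu
    simp only [eval_sub, taylor_eval] at hx
    simp only [hR_def]
    push_cast
    linear_combination hGu x - hx
  have hRinc : ∀ h, 0 ≤ h → ∀ x, R (x + h) - R x = R h - R 0 := by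
    intro h hh
    obtain ⟨v, -, hGv⟩ := hinc h hh
    set w := v - (taylor (h : ℂ) q - q)
    have hw : ∀ x : ℝ, R (x + h) - R x = w.eval (x : ℂ) := fun x => by
      simp only [hR_def, w, eval_sub, taylor_eval]
      push_cast
      linear_combination hGv x
    have hconst : w = C (w.eval 0) := eq_C_eval_zero_of_eval_add_one fun n => by
      have hn := ((hper.add_const h).sub hper) n
      simp only [Pi.sub_apply, hw] at hn
      exact_mod_cast hn
    intro x
    have h0 := hw 0
    rw [zero_add] at h0
    rw [hw, h0, hconst, eval_C, eval_C]
  refine ⟨q + C (R 0), (natDegree_add_le _ _).trans (by simpa using hq), fun x => ?_⟩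
  have hx := hper.eq_of_sub_eq_sub hR hRinc x
  rw [eval_add, eval_C]
  simp only [hR_def] at hx ⊢
  linear_combination hx

theorem exists_continuous_sub_eq_sub {E : Type*} [AddCommGroup E] [TopologicalSpace E]
    [IsTopologicalAddGroup E] {φ : ℝ → ℝ → E}
    (hval : ∀ a b c : ℝ, a ≤ b → b ≤ c → φ a c + φ b b = φ a b + φ b c)
    (hcont : Continuous fun p : ℝ × ℝ => φ p.1 p.2) :
    ∃ G : ℝ → E, Continuous G ∧ ∀ a b, a ≤ b → φ a b - φ b b = G b - G a := by
  have hcont₂ {f g : ℝ → ℝ} (hf : Continuous f) (hg : Continuous g) :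
      Continuous fun x => φ (f x) (g x) :=
    hcont.comp (hf.prodMk hg)
  refine ⟨fun x => if 0 ≤ x then φ 0 x - φ x x else φ 0 0 - φ x 0, ?_, fun a b hab => ?_⟩
  · refine Continuous.if_le ?_ ?_ continuous_const continuous_id fun x hx => by simp [← hx]
    · exact (hcont₂ continuous_const continuous_id).sub (hcont₂ continuous_id continuous_id)
    · exact continuous_const.sub (hcont₂ continuous_id continuous_const)
  dsimp only
  rcases le_or_gt 0 a with ha | ha
  · rw [if_pos ha, if_pos (ha.trans hab), eq_sub_of_add_eq' (hval 0 a b ha hab).symm]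
    abel
  rcases le_or_gt 0 b with hb | hb
  · rw [if_neg ha.not_ge, if_pos hb, eq_sub_of_add_eq (hval a 0 b ha.le hb)]
    abel
  · rw [if_neg ha.not_ge, if_neg hb.not_ge, eq_sub_of_add_eq (hval a b 0 hab hb.le).symm]
    abel

/-- A continuous valuation on compact intervals of ℝ that is polynomial of
degree at most `ℓ` has the form `φ [a,b] = P a + Q b` with `P, Q` polynomials of degree
at most `ℓ + 1`. Here `φ a b` denotes the value of the valuation on the interval `[a,b]`. -/
theorem stmt0 (ℓ : ℕ) (φ : ℝ → ℝ → ℂ)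
    (hval : ∀ a b c : ℝ, a ≤ b → b ≤ c → φ a c + φ b b = φ a b + φ b c)
    (hcont : Continuous fun p : ℝ × ℝ => φ p.1 p.2)
    (hpoly : ∀ a b : ℝ, a ≤ b → ∃ T : Polynomial ℂ, T.natDegree ≤ ℓ ∧
      ∀ x : ℝ, φ (a + x) (b + x) = T.eval (x : ℂ)) :
    ∃ P Q : Polynomial ℂ, P.natDegree ≤ ℓ + 1 ∧ Q.natDegree ≤ ℓ + 1 ∧
      ∀ a b : ℝ, a ≤ b → φ a b = P.eval (a : ℂ) + Q.eval (b : ℂ) := by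
  obtain ⟨G, hG, hφG⟩ := exists_continuous_sub_eq_sub hval hcont
  obtain ⟨T₀, hT₀, hφT₀⟩ := hpoly 0 0 le_rfl
  have hdiag : ∀ x : ℝ, φ x x = T₀.eval (x : ℂ) := fun x => by simpa using hφT₀ x
  have hinc : ∀ h, 0 ≤ h → ∃ u : ℂ[X], u.natDegree ≤ ℓ ∧
      ∀ x : ℝ, G (x + h) - G x = u.eval (x : ℂ) := by
    intro h hh
    obtain ⟨T, hT, hφT⟩ := hpoly 0 h hh
    refine ⟨T - taylor (h : ℂ) T₀,
      (natDegree_sub_le _ _).trans (max_le hT ((natDegree_taylor _ _).trans_le hT₀)), fun x => ?_⟩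
    rw [← hφG x (x + h) (le_add_of_nonneg_right hh), eval_sub, taylor_eval, ← hφT x,
      ← Complex.ofReal_add, ← hdiag, zero_add, add_comm h x]
  obtain ⟨q, hq, hGq⟩ := exists_eq_eval_of_forall_sub_eq_eval hG hinc
  refine ⟨-q, q + T₀, by rwa [natDegree_neg], (natDegree_add_le _ _).trans
    (max_le hq (hT₀.trans ℓ.le_succ)), fun a b hab => ?_⟩
  rw [eval_neg, eval_add, ← hGq, ← hGq, ← hdiag]
  linear_combination hφG a b hab
end

section
/- Let E be a finite-dimensional complex vector space of smooth functions on ℝ^d that is invariant under all translations (f ∈ E, a ∈ ℝ^d implies x ↦ f(x+a) ∈ E) and invariant under the SO(d)-action (f ∈ E, U ∈ SO(d) implies x ↦ f(U⁻¹x) ∈ E), with d ≥ 2. Then E consists of polynomials: every exponential-polynomial f(x) = Σ_i e^{⟨ξ_i,x⟩} p_i(x) lying in such an E must have all ξ_i = 0. -/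
set_option maxHeartbeats 1000000
open Matrix
section L1sec
open MvPolynomial

lemma poly_zero_of_real_roots (Q : Polynomial ℂ)
    (h : ∀ t : ℝ, Q.eval (t : ℂ) = 0) : Q = 0 := by
  apply Polynomial.eq_zero_of_infinite_isRoot
  apply Set.Infinite.mono (s := Set.range (fun t : ℝ => (t : ℂ)))
  · rintro _ ⟨t, rfl⟩; exact h t
  · exact Set.infinite_range_of_injective Complex.ofReal_injective

lemma mv_eval_real_zero : ∀ (d : ℕ) (p : MvPolynomial (Fin d) ℂ),
    (∀ x : Fin d → ℝ, eval (fun j => (x j : ℂ)) p = 0) → p = 0 := by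
  intro d
  induction d with
  | zero =>
    intro p h
    rw [eq_C_of_isEmpty p]
    have := h (fun j => 0)
    rw [eq_C_of_isEmpty p] at this
    simpa using this
  | succ d ih =>
    intro p h
    have key : ∀ k, (finSuccEquiv ℂ d p).coeff k = 0 := by
      intro k
      apply ih
      intro x
      have h2 : ∀ t : ℝ, (Polynomial.map (eval (fun j => (x j : ℂ)))
          (finSuccEquiv ℂ d p)).eval (t : ℂ) = 0 := by
        intro t
        have := h (Fin.cons t x)
        rw [show (fun j => ((Fin.cons t x : Fin (d+1) → ℝ) j : ℂ)) =
          Fin.cons (t : ℂ) (fun j => (x j : ℂ)) from funext (Fin.cases rfl (fun i => rfl))] at this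
        rwa [eval_eq_eval_mv_eval'] at this
      have := poly_zero_of_real_roots _ h2
      have := congrArg (fun q => Polynomial.coeff q k) this
      simpa [Polynomial.coeff_map] using this
    have : finSuccEquiv ℂ d p = 0 := Polynomial.ext (by simpa using key)
    have := congrArg (finSuccEquiv ℂ d).symm this
    simpa using this

end L1sec
section L2sec
open Polynomial

noncomputable def opA (a : ℂ) (q : Polynomial ℂ) : Polynomial ℂ :=
  Polynomial.C a * q + derivative q

lemma opA_ne_zero {a : ℂ} (ha : a ≠ 0) {q : Polynomial ℂ} (hq : q ≠ 0) :
    opA a q ≠ 0 := by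
  have hca : Polynomial.C a * q ≠ 0 := mul_ne_zero (by simpa using ha) hq
  have hdeg : (derivative q).degree < (Polynomial.C a * q).degree := by
    rw [Polynomial.degree_C_mul ha]
    exact Polynomial.degree_derivative_lt hq
  have : (opA a q).degree = (Polynomial.C a * q).degree :=
    Polynomial.degree_add_eq_left_of_degree_lt hdeg
  intro h0
  rw [h0, Polynomial.degree_zero] at this
  exact hca (Polynomial.degree_eq_bot.mp this.symm)

lemma opA_iter_ne_zero {a : ℂ} (ha : a ≠ 0) {q : Polynomial ℂ} (hq : q ≠ 0) :
    ∀ j, (opA a)^[j] q ≠ 0 := by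
  intro j
  induction j with
  | zero => simpa using hq
  | succ j ihj => rw [Function.iterate_succ_apply']; exact opA_ne_zero ha ihj

lemma hasDerivAt_exp_poly (z : ℂ) (q : Polynomial ℂ) (t : ℝ) :
    HasDerivAt (fun t : ℝ => Complex.exp (z * t) * q.eval (t : ℂ))
      (Complex.exp (z * t) * (z * q.eval (t : ℂ) + (derivative q).eval (t : ℂ))) t := by
  have h1 : HasDerivAt (fun s : ℂ => Complex.exp (z * s) * q.eval s)
      (Complex.exp (z * t) * (z * q.eval (t : ℂ) + (derivative q).eval (t : ℂ))) (t : ℂ) := by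
    have he : HasDerivAt (fun s : ℂ => Complex.exp (z * s))
        (Complex.exp (z * (t : ℂ)) * z) (t : ℂ) := by
      have : HasDerivAt (fun s : ℂ => z * s) z (t : ℂ) := by
        simpa using (hasDerivAt_id ((t : ℝ) : ℂ)).const_mul z
      simpa using this.cexp
    have hq := Polynomial.hasDerivAt q ((t : ℝ) : ℂ)
    have := he.fun_mul hq
    exact this.congr_deriv (by ring)
  exact h1.comp_ofReal

/-- Single derivative step. -/
lemma step_lemma (s : Finset ℂ) (q : ℂ → Polynomial ℂ) (b : ℂ)
    (H : ∀ t : ℝ, ∑ z ∈ s, Complex.exp (z * t) * (q z).eval (t : ℂ) = 0) :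
    ∀ t : ℝ, ∑ z ∈ s, Complex.exp (z * t) * ((opA (z - b)) (q z)).eval (t : ℂ) = 0 := by
  have HF : ∀ t : ℝ, ∑ z ∈ s, Complex.exp ((z - b) * t) * (q z).eval (t : ℂ) = 0 := by
    intro t
    have : ∑ z ∈ s, Complex.exp ((z - b) * t) * (q z).eval (t : ℂ)
        = Complex.exp (-b * t) * ∑ z ∈ s, Complex.exp (z * t) * (q z).eval (t : ℂ) := by
      rw [Finset.mul_sum]
      refine Finset.sum_congr rfl (fun z _ => ?_)
      rw [← mul_assoc, ← Complex.exp_add]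
      ring_nf
    rw [this, H t, mul_zero]
  intro t
  have hD : ∀ u : ℝ, HasDerivAt (fun t : ℝ => ∑ z ∈ s, Complex.exp ((z - b) * t) * (q z).eval (t : ℂ))
      (∑ z ∈ s, Complex.exp ((z - b) * u) * ((z - b) * (q z).eval (u : ℂ) + (derivative (q z)).eval (u : ℂ))) u :=
    fun u => HasDerivAt.fun_sum (fun z _ => hasDerivAt_exp_poly (z - b) (q z) u)
  have hzero : (fun t : ℝ => ∑ z ∈ s, Complex.exp ((z - b) * t) * (q z).eval (t : ℂ)) = fun _ => 0 :=
    funext HF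
  have hD0 : ∑ z ∈ s, Complex.exp ((z - b) * t) * ((z - b) * (q z).eval (t : ℂ) + (derivative (q z)).eval (t : ℂ)) = 0 := by
    have h1 := hD t
    rw [hzero] at h1
    exact h1.unique (hasDerivAt_const t 0)
  have : ∑ z ∈ s, Complex.exp (z * t) * ((opA (z - b)) (q z)).eval (t : ℂ)
      = Complex.exp (b * t) * ∑ z ∈ s, Complex.exp ((z - b) * t) * ((z - b) * (q z).eval (t : ℂ) + (derivative (q z)).eval (t : ℂ)) := by
    rw [Finset.mul_sum]
    refine Finset.sum_congr rfl (fun z _ => ?_)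
    rw [← mul_assoc, ← Complex.exp_add, show b * (t:ℂ) + (z - b) * t = z * t by ring]
    simp only [opA, Polynomial.eval_add, Polynomial.eval_mul, Polynomial.eval_C]
  rw [this, hD0, mul_zero]

/-- 1-D linear independence of exponential polynomials. -/
lemma one_dim_exp (s : Finset ℂ) : ∀ (q : ℂ → Polynomial ℂ),
    (∀ t : ℝ, ∑ z ∈ s, Complex.exp (z * t) * (q z).eval (t : ℂ) = 0) →
    ∀ z ∈ s, q z = 0 := by
  classical
  induction s using Finset.induction_on with
  | empty => intro q H z hz; simp at hz
  | @insert z₀ s' hz₀ ih =>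
    intro q H
    set D := (q z₀).natDegree + 1 with hD
    have key : ∀ j, ∀ t : ℝ, ∑ z ∈ insert z₀ s',
        Complex.exp (z * t) * ((opA (z - z₀))^[j] (q z)).eval (t : ℂ) = 0 := by
      intro j
      induction j with
      | zero => simpa using H
      | succ j ihj =>
        have := step_lemma (insert z₀ s') (fun z => (opA (z - z₀))^[j] (q z)) z₀ ihj
        intro t
        have h2 := this t
        refine Eq.trans (Finset.sum_congr rfl (fun z _ => ?_)) h2
        rw [Function.iterate_succ_apply']
    have hz₀term : (opA (z₀ - z₀))^[D] (q z₀) = 0 := by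
      have : opA (z₀ - z₀) = fun q => derivative q := by
        funext r; simp [opA]
      rw [this]
      exact Polynomial.iterate_derivative_eq_zero (by omega)
    have hs' : ∀ t : ℝ, ∑ z ∈ s', Complex.exp (z * t) * ((opA (z - z₀))^[D] (q z)).eval (t : ℂ) = 0 := by
      intro t
      have := key D t
      rwa [Finset.sum_insert hz₀, hz₀term, Polynomial.eval_zero, mul_zero, zero_add] at this
    have hind := ih (fun z => (opA (z - z₀))^[D] (q z)) hs'
    have hqs' : ∀ z ∈ s', q z = 0 := by
      intro z hz
      by_contra hq
      exact opA_iter_ne_zero (sub_ne_zero.mpr (fun h => hz₀ (by rw [← h]; exact hz))) hq D (hind z hz)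
    have hz₀only : ∀ t : ℝ, Complex.exp (z₀ * t) * (q z₀).eval (t : ℂ) = 0 := by
      intro t
      have := H t
      rw [Finset.sum_insert hz₀] at this
      rw [Finset.sum_eq_zero (fun z hz => by rw [hqs' z hz]; simp)] at this
      simpa using this
    have : q z₀ = 0 := by
      apply Polynomial.eq_zero_of_infinite_isRoot
      apply Set.Infinite.mono (s := Set.range (fun t : ℝ => (t : ℂ)))
      · rintro _ ⟨t, rfl⟩
        have := hz₀only t
        simpa [Complex.exp_ne_zero] using this
      · exact Set.infinite_range_of_injective Complex.ofReal_injective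
    intro z hz
    rcases Finset.mem_insert.mp hz with h | h
    · rw [h]; exact this
    · exact hqs' z h

end L2sec
section L3sec
open MvPolynomial

noncomputable def linForm {d : ℕ} (ζ : Fin d → ℂ) : MvPolynomial (Fin d) ℂ :=
  ∑ j, MvPolynomial.C (ζ j) * MvPolynomial.X j

lemma linForm_ne_zero {d : ℕ} {ζ : Fin d → ℂ} (hζ : ζ ≠ 0) : linForm ζ ≠ 0 := by
  obtain ⟨j, hj⟩ := Function.ne_iff.mp hζ
  intro h0
  apply hj
  have := congrArg (MvPolynomial.coeff (Finsupp.single j 1)) h0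
  rw [linForm] at this
  simp only [MvPolynomial.coeff_sum, MvPolynomial.coeff_zero] at this
  rw [Finset.sum_eq_single j] at this
  · simpa [MvPolynomial.coeff_C_mul, MvPolynomial.coeff_X] using this
  · intro b _ hb
    rw [MvPolynomial.coeff_C_mul]
    rw [show MvPolynomial.X b = MvPolynomial.monomial (Finsupp.single b 1) (1:ℂ) from rfl]
    rw [MvPolynomial.coeff_monomial, if_neg (fun h => hb (by
      have := Finsupp.single_left_injective (one_ne_zero (α := ℕ)) h
      exact this))]
    ring
  · intro h; exact absurd (Finset.mem_univ j) h

lemma linForm_eval {d : ℕ} (ζ : Fin d → ℂ) (w : Fin d → ℂ) :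
    eval w (linForm ζ) = ∑ j, ζ j * w j := by
  simp [linForm]

/-- there is a real direction separating finitely many complex frequencies -/
lemma exists_sep_dir {d : ℕ} (s : Finset (Fin d → ℂ)) :
    ∃ v : Fin d → ℝ, ∀ η ∈ s, ∀ η' ∈ s, η ≠ η' →
      (∑ j, η j * (v j : ℂ)) ≠ (∑ j, η' j * (v j : ℂ)) := by
  classical
  set t := (s ×ˢ s).filter (fun ab => ab.1 ≠ ab.2) with ht
  set Pprod : MvPolynomial (Fin d) ℂ := ∏ ab ∈ t, linForm (ab.1 - ab.2) with hP
  have hPne : Pprod ≠ 0 := by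
    rw [hP, Finset.prod_ne_zero_iff]
    intro ab hab
    exact linForm_ne_zero (sub_ne_zero.mpr ((Finset.mem_filter.mp hab).2))
  obtain ⟨v, hv⟩ : ∃ v : Fin d → ℝ, eval (fun j => (v j : ℂ)) Pprod ≠ 0 := by
    by_contra h
    push_neg at h
    exact hPne (mv_eval_real_zero d Pprod h)
  refine ⟨v, fun η hη η' hη' hne => ?_⟩
  have hmem : (η, η') ∈ t := by
    rw [ht, Finset.mem_filter, Finset.mem_product]; exact ⟨⟨hη, hη'⟩, hne⟩
  have : eval (fun j => (v j : ℂ)) (linForm (η - η')) ≠ 0 := by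
    intro h0
    apply hv
    rw [hP, map_prod]
    exact Finset.prod_eq_zero hmem h0
  rw [linForm_eval] at this
  intro heq
  apply this
  rw [show (∑ j, (η - η') j * ((v j : ℝ):ℂ)) = (∑ j, η j * (v j:ℂ)) - ∑ j, η' j * (v j:ℂ) by
    rw [← Finset.sum_sub_distrib]
    exact Finset.sum_congr rfl (fun j _ => by simp [Pi.sub_apply, sub_mul])]
  rw [heq]
  exact sub_self _

/-- evaluation of an MvPolynomial along an affine line -/
noncomputable def linePoly {d : ℕ} (x0 v : Fin d → ℝ) (P : MvPolynomial (Fin d) ℂ) :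
    Polynomial ℂ :=
  MvPolynomial.aeval (fun j => Polynomial.C ((x0 j : ℂ)) + Polynomial.C ((v j : ℂ)) * Polynomial.X) P

lemma linePoly_eval {d : ℕ} (x0 v : Fin d → ℝ) (P : MvPolynomial (Fin d) ℂ) (t : ℂ) :
    (linePoly x0 v P).eval t = eval (fun j => (x0 j : ℂ) + (v j : ℂ) * t) P := by
  rw [linePoly]
  induction P using MvPolynomial.induction_on with
  | C a => simp
  | add p q hp hq => simp [hp, hq]
  | mul_X p j hp => simp [hp]

/-- multidimensional independence of exponential-polynomials, fiberwise form -/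
lemma multi_dim_exp {d : ℕ} (s : Finset (Fin d → ℂ))
    (P : (Fin d → ℂ) → MvPolynomial (Fin d) ℂ)
    (H : ∀ x : Fin d → ℝ, ∑ η ∈ s, Complex.exp (∑ j, η j * (x j : ℂ)) *
        eval (fun j => (x j : ℂ)) (P η) = 0) :
    ∀ η ∈ s, P η = 0 := by
  classical
  obtain ⟨v, hv⟩ := exists_sep_dir s
  set c : (Fin d → ℂ) → ℂ := fun η => ∑ j, η j * (v j : ℂ) with hc
  have hinj : ∀ η ∈ s, ∀ η' ∈ s, c η = c η' → η = η' := by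
    intro η hη η' hη' h
    by_contra hne
    exact hv η hη η' hη' hne h
  suffices hS : ∀ η ∈ s, ∀ x0 : Fin d → ℝ, eval (fun j => (x0 j : ℂ)) (P η) = 0 by
    intro η hη
    exact mv_eval_real_zero d (P η) (hS η hη)
  intro η₀ hη₀ x0
  set Q : ℂ → Polynomial ℂ := fun zc => ∑ η ∈ s.filter (fun η => c η = zc),
    Polynomial.C (Complex.exp (∑ j, η j * (x0 j : ℂ))) * linePoly x0 v (P η) with hQ
  have hmain : ∀ t : ℝ, ∑ zc ∈ s.image c, Complex.exp (zc * t) * (Q zc).eval (t : ℂ) = 0 := by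
    intro t
    have hexp : ∀ η ∈ s, Complex.exp (c η * t) * Complex.exp (∑ j, η j * (x0 j : ℂ))
        = Complex.exp (∑ j, η j * ((x0 j + t * v j : ℝ) : ℂ)) := by
      intro η _
      rw [← Complex.exp_add]
      congr 1
      rw [hc, Finset.sum_mul, ← Finset.sum_add_distrib]
      congr 1; funext j
      push_cast
      ring
    calc ∑ zc ∈ s.image c, Complex.exp (zc * t) * (Q zc).eval (t : ℂ)
        = ∑ zc ∈ s.image c, ∑ η ∈ s.filter (fun η => c η = zc),
            Complex.exp (c η * t) * (Polynomial.C (Complex.exp (∑ j, η j * (x0 j : ℂ))) *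
              linePoly x0 v (P η)).eval (t : ℂ) := by
          refine Finset.sum_congr rfl (fun zc _ => ?_)
          rw [hQ, Polynomial.eval_finset_sum, Finset.mul_sum]
          refine Finset.sum_congr rfl (fun η hη => ?_)
          rw [(Finset.mem_filter.mp hη).2]
      _ = ∑ η ∈ s, Complex.exp (c η * t) * (Polynomial.C (Complex.exp (∑ j, η j * (x0 j : ℂ))) *
              linePoly x0 v (P η)).eval (t : ℂ) :=
          Finset.sum_fiberwise_of_maps_to (fun η hη => Finset.mem_image_of_mem c hη) _
      _ = ∑ η ∈ s, Complex.exp (∑ j, η j * ((x0 j + t * v j : ℝ) : ℂ)) *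
            eval (fun j => ((x0 j + t * v j : ℝ) : ℂ)) (P η) := by
          refine Finset.sum_congr rfl (fun η hη => ?_)
          rw [Polynomial.eval_mul, Polynomial.eval_C, linePoly_eval, ← mul_assoc, hexp η hη]
          congr 1
          refine congrArg (fun w => eval w (P η)) ?_
          funext j; push_cast; ring
      _ = 0 := H (fun j => x0 j + t * v j)
  have hQ0 := one_dim_exp (s.image c) Q hmain (c η₀) (Finset.mem_image_of_mem c hη₀)
  have hfilter : s.filter (fun η => c η = c η₀) = {η₀} := by
    apply Finset.ext
    intro a
    simp only [Finset.mem_filter, Finset.mem_singleton]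
    constructor
    · rintro ⟨ha, hca⟩; exact hinj a ha η₀ hη₀ hca
    · rintro rfl; exact ⟨hη₀, rfl⟩
  rw [hQ] at hQ0
  simp only [hfilter, Finset.sum_singleton] at hQ0
  have hlp : linePoly x0 v (P η₀) = 0 := by
    rcases mul_eq_zero.mp hQ0 with h | h
    · exact absurd (Polynomial.C_injective (by rw [h, map_zero])) (Complex.exp_ne_zero _)
    · exact h
  have := congrArg (Polynomial.eval (0 : ℂ)) hlp
  rw [linePoly_eval] at this
  simpa using this

end L3sec
section L4sec

variable {d : ℕ}

/-- planar rotation matrix in coordinates j0, j1 -/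
noncomputable def rotM (j0 j1 : Fin d) (θ : ℝ) : Matrix (Fin d) (Fin d) ℝ :=
  Matrix.of fun i k =>
    if i = j0 ∧ k = j0 then Real.cos θ
    else if i = j0 ∧ k = j1 then -Real.sin θ
    else if i = j1 ∧ k = j0 then Real.sin θ
    else if i = j1 ∧ k = j1 then Real.cos θ
    else if i = k then 1 else 0

/-- action of the planar rotation on complex frequency vectors -/
noncomputable def rotV (j0 j1 : Fin d) (θ : ℝ) (ξ : Fin d → ℂ) : Fin d → ℂ :=
  fun k =>
    if k = j0 then Real.cos θ * ξ j0 - Real.sin θ * ξ j1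
    else if k = j1 then Real.sin θ * ξ j0 + Real.cos θ * ξ j1
    else ξ k

section rotlemmas
variable {j0 j1 : Fin d}

lemma rotM_mul (h01 : j0 ≠ j1) (θ φ : ℝ) :
    rotM j0 j1 θ * rotM j0 j1 φ = rotM j0 j1 (θ + φ) := by
  ext i k
  rw [Matrix.mul_apply]
  have hsplit : ∀ f : Fin d → ℝ, ∑ j, f j = f j0 + f j1 + ∑ j ∈ ({j0, j1} : Finset (Fin d))ᶜ, f j := by
    intro f
    rw [← Finset.sum_pair h01, Finset.sum_add_sum_compl]
  rw [hsplit]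
  have hcompl : ∑ j ∈ ({j0, j1} : Finset (Fin d))ᶜ, rotM j0 j1 θ i j * rotM j0 j1 φ j k
      = if i ∈ ({j0, j1} : Finset (Fin d))ᶜ then rotM j0 j1 φ i k else 0 := by
    rw [← Finset.sum_ite_eq (({j0, j1} : Finset (Fin d))ᶜ) i (fun j => rotM j0 j1 φ j k)]
    refine Finset.sum_congr rfl (fun j hj => ?_)
    have hj0 : j ≠ j0 := by intro h; rw [Finset.mem_compl] at hj; exact hj (by simp [h])
    have hj1 : j ≠ j1 := by intro h; rw [Finset.mem_compl] at hj; exact hj (by simp [h])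
    by_cases hij : i = j <;>
      simp [rotM, hij, hj0, hj1]
  rw [hcompl]
  by_cases hi0 : i = j0 <;> by_cases hi1 : i = j1 <;>
    by_cases hk0 : k = j0 <;> by_cases hk1 : k = j1 <;>
    simp_all [rotM, Finset.mem_compl, Real.cos_add, Real.sin_add] <;>
    (try (intro h; exact absurd h.symm (by assumption))) <;>
    (try rw [if_neg (fun h => h01 h.symm)]) <;>
    (try ring)
end rotlemmas

section rotlemmas2
variable {j0 j1 : Fin d}

lemma rotM_zero : rotM j0 j1 0 = 1 := by
  ext i k
  by_cases hi0 : i = j0 <;> by_cases hi1 : i = j1 <;>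
    by_cases hk0 : k = j0 <;> by_cases hk1 : k = j1 <;>
    simp_all [rotM, Matrix.one_apply] <;>
    (try (intro h; exact absurd h.symm (by assumption))) <;>
    (try (exact fun h => absurd h.symm (by assumption)))

lemma rotM_transpose (θ : ℝ) : (rotM j0 j1 θ)ᵀ = rotM j0 j1 (-θ) := by
  ext i k
  by_cases hi0 : i = j0 <;> by_cases hi1 : i = j1 <;>
    by_cases hk0 : k = j0 <;> by_cases hk1 : k = j1 <;>
    simp_all [rotM, Matrix.transpose_apply, eq_comm]

lemma rotM_orth (h01 : j0 ≠ j1) (θ : ℝ) : rotM j0 j1 θ * (rotM j0 j1 θ)ᵀ = 1 := by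
  rw [rotM_transpose, rotM_mul h01, add_neg_cancel, rotM_zero]

lemma rotM_det (h01 : j0 ≠ j1) (θ : ℝ) : (rotM j0 j1 θ).det = 1 := by
  have hhalf : rotM j0 j1 (θ/2) * rotM j0 j1 (θ/2) = rotM j0 j1 θ := by
    rw [rotM_mul h01, add_halves]
  have hsq : (rotM j0 j1 θ).det = ((rotM j0 j1 (θ/2)).det) ^ 2 := by
    rw [← hhalf, Matrix.det_mul, sq]
  have h1 : (rotM j0 j1 θ).det * (rotM j0 j1 θ).det = 1 := by
    have := congrArg Matrix.det (rotM_orth h01 θ)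
    rwa [Matrix.det_mul, Matrix.det_transpose, Matrix.det_one] at this
  have hnn : 0 ≤ (rotM j0 j1 θ).det := hsq ▸ sq_nonneg _
  nlinarith [h1, hnn]

lemma rotV_eq_mulVec (h01 : j0 ≠ j1) (θ : ℝ) (ξ : Fin d → ℂ) (k : Fin d) :
    rotV j0 j1 θ ξ k = ∑ j, ((rotM j0 j1 θ k j : ℝ) : ℂ) * ξ j := by
  have hsplit : ∀ f : Fin d → ℂ, ∑ j, f j = f j0 + f j1 + ∑ j ∈ ({j0, j1} : Finset (Fin d))ᶜ, f j := by
    intro f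
    rw [← Finset.sum_pair h01, Finset.sum_add_sum_compl]
  rw [hsplit]
  have hcompl : ∑ j ∈ ({j0, j1} : Finset (Fin d))ᶜ, ((rotM j0 j1 θ k j : ℝ) : ℂ) * ξ j
      = if k ∈ ({j0, j1} : Finset (Fin d))ᶜ then ξ k else 0 := by
    rw [← Finset.sum_ite_eq (({j0, j1} : Finset (Fin d))ᶜ) k (fun j => ξ j)]
    refine Finset.sum_congr rfl (fun j hj => ?_)
    have hj0 : j ≠ j0 := by intro h; rw [Finset.mem_compl] at hj; exact hj (by simp [h])
    have hj1 : j ≠ j1 := by intro h; rw [Finset.mem_compl] at hj; exact hj (by simp [h])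
    by_cases hkj : k = j <;> simp [rotM, hkj, hj0, hj1]
  rw [hcompl]
  clear hsplit hcompl
  by_cases hk0 : k = j0 <;> by_cases hk1 : k = j1 <;>
    simp [rotV, rotM, hk0, hk1, h01, Ne.symm h01, Finset.mem_compl] <;>
    push_cast <;> ring

lemma complex_re_im_zero (u v : ℝ) (h : (u : ℂ) + v * Complex.I = 0) : u = 0 ∧ v = 0 := by
  have hre := congrArg Complex.re h
  have him := congrArg Complex.im h
  simp at hre him
  exact ⟨hre, him⟩

lemma plane_inj {a b : ℂ} (hab : ¬(a = 0 ∧ b = 0)) (u v : ℝ)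
    (h1 : (u : ℂ) * a - v * b = 0) (h2 : (u : ℂ) * b + v * a = 0) : u = 0 ∧ v = 0 := by
  have k1 : ((u : ℂ) + v * Complex.I) * (a + b * Complex.I) = 0 := by
    linear_combination h1 + Complex.I * h2 + (v : ℂ) * b * Complex.I_sq
  have k2 : ((u : ℂ) - v * Complex.I) * (a - b * Complex.I) = 0 := by
    linear_combination h1 - Complex.I * h2 + (v : ℂ) * b * Complex.I_sq
  by_cases hA : a + b * Complex.I = 0
  · have hB : a - b * Complex.I ≠ 0 := by
      intro hB
      apply hab
      constructor
      · have : (2 : ℂ) * a = 0 := by linear_combination hA + hB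
        simpa using this
      · have : (2 : ℂ) * (b * Complex.I) = 0 := by linear_combination hA - hB
        simpa [Complex.I_ne_zero] using this
    rcases mul_eq_zero.mp k2 with h | h
    · have := complex_re_im_zero u (-v) (by push_cast; linear_combination h)
      exact ⟨this.1, by linarith [this.2]⟩
    · exact absurd h hB
  · rcases mul_eq_zero.mp k1 with h | h
    · exact complex_re_im_zero u v h
    · exact absurd h hA

lemma plane_rot_ne (h01 : j0 ≠ j1) {ξ : Fin d → ℂ} (hplane : ¬(ξ j0 = 0 ∧ ξ j1 = 0))
    (θ : ℝ) : ¬(rotV j0 j1 θ ξ j0 = 0 ∧ rotV j0 j1 θ ξ j1 = 0) := by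
  rintro ⟨e1, e2⟩
  rw [rotV, if_pos rfl] at e1
  rw [rotV, if_neg (fun h => h01 h.symm), if_pos rfl] at e2
  have := plane_inj hplane (Real.cos θ) (Real.sin θ) e1 (by linear_combination e2)
  have htrig := Real.sin_sq_add_cos_sq θ
  rw [this.1, this.2] at htrig
  norm_num at htrig

lemma angle_eq {θ θ0 : ℝ} (hc : Real.cos θ = Real.cos θ0) (hs : Real.sin θ = Real.sin θ0) :
    ∃ k : ℤ, θ = θ0 + k * (2 * Real.pi) := by
  have hexp : Complex.exp (θ * Complex.I) = Complex.exp (θ0 * Complex.I) := by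
    rw [Complex.exp_mul_I, Complex.exp_mul_I, ← Complex.ofReal_cos, ← Complex.ofReal_sin,
      ← Complex.ofReal_cos, ← Complex.ofReal_sin, hc, hs]
  obtain ⟨k, hk⟩ := Complex.exp_eq_exp_iff_exists_int.mp hexp
  refine ⟨k, ?_⟩
  have : (θ : ℂ) * Complex.I = (θ0 + k * (2 * Real.pi) : ℝ) * Complex.I := by
    rw [hk]; push_cast; ring
  have := mul_right_cancel₀ Complex.I_ne_zero this
  exact_mod_cast this

lemma rot_fixed_countable (h01 : j0 ≠ j1) {ξ : Fin d → ℂ} (hplane : ¬(ξ j0 = 0 ∧ ξ j1 = 0))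
    (ζ : Fin d → ℂ) : {θ : ℝ | rotV j0 j1 θ ξ = ζ}.Countable := by
  rcases Set.eq_empty_or_nonempty {θ : ℝ | rotV j0 j1 θ ξ = ζ} with h | ⟨θ0, hθ0⟩
  · rw [h]; exact Set.countable_empty
  · apply Set.Countable.mono (s₂ := Set.range (fun k : ℤ => θ0 + k * (2 * Real.pi)))
    · intro θ hθ
      have heq : rotV j0 j1 θ ξ = rotV j0 j1 θ0 ξ := by
        rw [Set.mem_setOf_eq] at hθ hθ0; rw [hθ, hθ0]
      have e1 := congrFun heq j0
      have e2 := congrFun heq j1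
      rw [rotV, rotV, if_pos rfl, if_pos rfl] at e1
      rw [rotV, rotV, if_neg (fun h => h01 h.symm), if_pos rfl,
        if_neg (fun h => h01 h.symm), if_pos rfl] at e2
      have h1 : ((Real.cos θ - Real.cos θ0 : ℝ) : ℂ) * ξ j0 - ((Real.sin θ - Real.sin θ0 : ℝ) : ℂ) * ξ j1 = 0 := by
        push_cast at e1 ⊢; linear_combination e1
      have h2 : ((Real.cos θ - Real.cos θ0 : ℝ) : ℂ) * ξ j1 + ((Real.sin θ - Real.sin θ0 : ℝ) : ℂ) * ξ j0 = 0 := by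
        push_cast at e2 ⊢; linear_combination e2
      obtain ⟨hu, hv⟩ := plane_inj hplane _ _ h1 h2
      obtain ⟨k, hk⟩ := angle_eq (θ := θ) (θ0 := θ0) (by linarith) (by linarith)
      exact ⟨k, hk.symm⟩
    · exact Set.countable_range _

lemma rot_bad_countable (h01 : j0 ≠ j1) (ξ ζ : Fin d → ℂ)
    (h : ¬(ξ j0 = 0 ∧ ξ j1 = 0) ∨ ¬(ζ j0 = 0 ∧ ζ j1 = 0)) :
    {θ : ℝ | rotV j0 j1 θ ξ = ζ}.Countable := by
  by_cases hplane : ¬(ξ j0 = 0 ∧ ξ j1 = 0)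
  · exact rot_fixed_countable h01 hplane ζ
  · push_neg at hplane
    rcases h with h | h
    · exact absurd hplane h
    · convert Set.countable_empty
      rw [Set.eq_empty_iff_forall_notMem]
      intro θ hθ
      rw [Set.mem_setOf_eq] at hθ
      apply h
      constructor
      · rw [← hθ, rotV, if_pos rfl, hplane.1, hplane.2]; ring
      · rw [← hθ, rotV, if_neg (fun hh => h01 hh.symm), if_pos rfl, hplane.1, hplane.2]; ring

end rotlemmas2
end L4sec

section Extra
open MvPolynomial

noncomputable def substM {d : ℕ} (M : Matrix (Fin d) (Fin d) ℝ) :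
    MvPolynomial (Fin d) ℂ →ₐ[ℂ] MvPolynomial (Fin d) ℂ :=
  MvPolynomial.aeval (fun j => ∑ k, MvPolynomial.C ((M j k : ℝ) : ℂ) * MvPolynomial.X k)

lemma substM_eval {d : ℕ} (M : Matrix (Fin d) (Fin d) ℝ) (P : MvPolynomial (Fin d) ℂ)
    (x : Fin d → ℝ) :
    eval (fun j => (x j : ℂ)) (substM M P)
      = eval (fun j => ((M.mulVec x) j : ℂ)) P := by
  induction P using MvPolynomial.induction_on with
  | C a => simp [substM]
  | add p q hp hq => simp only [map_add, hp, hq]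
  | mul_X q j hq =>
    rw [_root_.map_mul, eval_mul, eval_mul, eval_X, hq]
    congr 1
    simp [substM, Matrix.mulVec, dotProduct]

lemma substM_ne_zero {d : ℕ} {M : Matrix (Fin d) (Fin d) ℝ} (horth : M * Mᵀ = 1)
    {P : MvPolynomial (Fin d) ℂ} (hP : P ≠ 0) : substM Mᵀ P ≠ 0 := by
  intro h0
  refine hP (mv_eval_real_zero d P (fun y => ?_))
  have := substM_eval Mᵀ P (M.mulVec y)
  rw [h0, map_zero] at this
  rw [Matrix.mulVec_mulVec, mul_eq_one_comm.mp horth, Matrix.one_mulVec] at this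
  exact this.symm

lemma rotV_cancel {d : ℕ} {j0 j1 : Fin d} (h01 : j0 ≠ j1) (θ : ℝ) {ξ ζ : Fin d → ℂ}
    (h : rotV j0 j1 θ ξ = rotV j0 j1 θ ζ) : ξ = ζ := by
  have htrigC : ((Real.sin θ : ℂ))^2 + ((Real.cos θ : ℂ))^2 = 1 := by
    exact_mod_cast congrArg (fun r : ℝ => (r : ℂ)) (Real.sin_sq_add_cos_sq θ)
  have e1 := congrFun h j0
  have e2 := congrFun h j1
  rw [rotV, rotV, if_pos rfl, if_pos rfl] at e1
  rw [rotV, rotV, if_neg (fun hh => h01 hh.symm), if_pos rfl,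
    if_neg (fun hh => h01 hh.symm), if_pos rfl] at e2
  funext k
  by_cases hk0 : k = j0
  · subst hk0
    linear_combination ((Real.cos θ : ℂ)) * e1 + ((Real.sin θ : ℂ)) * e2 + (ζ k - ξ k) * htrigC
  · by_cases hk1 : k = j1
    · subst hk1
      linear_combination ((Real.cos θ : ℂ)) * e2 - ((Real.sin θ : ℂ)) * e1 + (ζ k - ξ k) * htrigC
    · have := congrFun h k
      rwa [rotV, rotV, if_neg hk0, if_neg hk1, if_neg hk0, if_neg hk1] at this

lemma choose_thetas {d n : ℕ} {j0 j1 : Fin d} (h01 : j0 ≠ j1)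
    (ξ : Fin n → (Fin d → ℂ)) (hξ : Function.Injective ξ) (i0 : Fin n)
    (hplane : ¬(ξ i0 j0 = 0 ∧ ξ i0 j1 = 0)) :
    ∀ m : ℕ, ∃ θ : Fin m → ℝ, ∀ (k l : Fin m) (i : Fin n),
      rotV j0 j1 (θ k) (ξ i0) = rotV j0 j1 (θ l) (ξ i) → k = l ∧ i = i0 := by
  intro m
  induction m with
  | zero => exact ⟨fun k => 0, fun k => k.elim0⟩
  | succ m ih =>
    obtain ⟨θ, hθ⟩ := ih
    set B : Set ℝ := ⋃ (l : Fin m) (i : Fin n),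
      ({ψ | rotV j0 j1 ψ (ξ i0) = rotV j0 j1 (θ l) (ξ i)} ∪
       {ψ | rotV j0 j1 ψ (ξ i) = rotV j0 j1 (θ l) (ξ i0)}) with hB
    have hBc : B.Countable := by
      refine Set.countable_iUnion (fun l => Set.countable_iUnion (fun i => Set.Countable.union ?_ ?_))
      · exact rot_fixed_countable h01 hplane _
      · exact rot_bad_countable h01 (ξ i) _ (Or.inr (plane_rot_ne h01 hplane (θ l)))
    obtain ⟨ψ, hψ⟩ : ∃ ψ : ℝ, ψ ∉ B := by
      by_contra hall
      push_neg at hall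
      apply Cardinal.not_countable_real
      exact Set.Countable.mono (fun x _ => hall x) hBc
    refine ⟨Fin.snoc θ ψ, ?_⟩
    intro k l i h
    rcases Fin.eq_castSucc_or_eq_last k with ⟨k', rfl⟩ | rfl <;>
      rcases Fin.eq_castSucc_or_eq_last l with ⟨l', rfl⟩ | rfl
    · rw [Fin.snoc_castSucc, Fin.snoc_castSucc] at h
      obtain ⟨hkl, hi⟩ := hθ k' l' i h
      exact ⟨congrArg Fin.castSucc hkl, hi⟩
    · rw [Fin.snoc_castSucc, Fin.snoc_last] at h
      exact absurd (Set.mem_iUnion.mpr ⟨k', Set.mem_iUnion.mpr ⟨i, Or.inr h.symm⟩⟩) hψ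
    · rw [Fin.snoc_castSucc, Fin.snoc_last] at h
      exact absurd (Set.mem_iUnion.mpr ⟨l', Set.mem_iUnion.mpr ⟨i, Or.inl h⟩⟩) hψ
    · rw [Fin.snoc_last] at h
      exact ⟨rfl, hξ (rotV_cancel h01 ψ h).symm⟩

lemma freq_rot {d : ℕ} {j0 j1 : Fin d} (h01 : j0 ≠ j1) (θ : ℝ) (ξv : Fin d → ℂ)
    (x : Fin d → ℝ) :
    ∑ j, ξv j * (((rotM j0 j1 θ)ᵀ.mulVec x) j : ℂ)
      = ∑ j, (rotV j0 j1 θ ξv) j * (x j : ℂ) := by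
  simp only [rotV_eq_mulVec h01, Matrix.mulVec, dotProduct, Matrix.transpose_apply]
  push_cast
  simp only [Finset.mul_sum, Finset.sum_mul]
  rw [Finset.sum_comm]
  refine Finset.sum_congr rfl fun j _ => Finset.sum_congr rfl fun t _ => by ring

end Extra

/-- The set of special orthogonal `d × d` real matrices. For such `U`, `U⁻¹ = Uᵀ`. -/
def SOset (d : ℕ) : Set (Matrix (Fin d) (Fin d) ℝ) :=
  {U | U * U.transpose = 1 ∧ U.det = 1}

/-- Let `E` be a finite-dimensional space of smooth complex-valued functions
on ℝ^d (`d ≥ 2`), invariant under translations and under the `SO(d)` action. Then `E`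
consists of polynomials: any exponential-polynomial `f(x) = Σ_i e^{⟨ξ_i,x⟩} p_i(x)`
(with distinct `ξ_i` and nonzero `p_i`) lying in `E` must have all `ξ_i = 0`. -/
theorem stmt7 (d : ℕ) (hd : 2 ≤ d) (E : Submodule ℂ (EuclideanSpace ℝ (Fin d) → ℂ))
    (hfd : FiniteDimensional ℂ E)
    (hsm : ∀ f ∈ E, ContDiff ℝ (⊤ : ℕ∞) f)
    (htrans : ∀ f ∈ E, ∀ a : EuclideanSpace ℝ (Fin d), (fun x => f (x + a)) ∈ E)
    (hrot : ∀ f ∈ E, ∀ U ∈ SOset d,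
      (fun x : EuclideanSpace ℝ (Fin d) =>
        f (show EuclideanSpace ℝ (Fin d) from WithLp.toLp 2 (U.transpose.mulVec x))) ∈ E)
    (n : ℕ) (ξ : Fin n → (Fin d → ℂ)) (hξ : Function.Injective ξ)
    (p : Fin n → MvPolynomial (Fin d) ℂ) (hp : ∀ i, p i ≠ 0)
    (hf : (fun x : EuclideanSpace ℝ (Fin d) =>
        ∑ i, Complex.exp (∑ j, ξ i j * (x j : ℂ)) *
          MvPolynomial.eval (fun j => (x j : ℂ)) (p i)) ∈ E) :
    ∀ i, ξ i = 0 := by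
  classical
  by_contra hcon
  push_neg at hcon
  obtain ⟨i0, hi0⟩ := hcon
  obtain ⟨j0, hj0⟩ := Function.ne_iff.mp hi0
  obtain ⟨j1, hj1⟩ := Fintype.exists_ne_of_one_lt_card (by rw [Fintype.card_fin]; omega) j0
  have h01 : j0 ≠ j1 := Ne.symm hj1
  have hplane : ¬(ξ i0 j0 = 0 ∧ ξ i0 j1 = 0) := fun hh => hj0 (by simpa using hh.1)
  set N := Module.finrank ℂ E with hN
  obtain ⟨θ, hθ⟩ := choose_thetas h01 ξ hξ i0 hplane (N + 1)
  set F : EuclideanSpace ℝ (Fin d) → ℂ := fun x =>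
      ∑ i, Complex.exp (∑ j, ξ i j * (x j : ℂ)) *
        MvPolynomial.eval (fun j => (x j : ℂ)) (p i) with hF
  set G : Fin (N + 1) → (EuclideanSpace ℝ (Fin d) → ℂ) := fun k =>
      fun x : EuclideanSpace ℝ (Fin d) =>
        F (show EuclideanSpace ℝ (Fin d) from WithLp.toLp 2 ((rotM j0 j1 (θ k)).transpose.mulVec x)) with hG
  have hGmem : ∀ k, G k ∈ E := by
    intro k
    rw [hG]
    exact hrot F hf (rotM j0 j1 (θ k)) ⟨rotM_orth h01 _, rotM_det h01 _⟩
  set G' : Fin (N + 1) → E := fun k => ⟨G k, hGmem k⟩ with hG'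
  have hli : LinearIndependent ℂ G' := by
    rw [Fintype.linearIndependent_iff]
    intro c hc k0
    have hfun : ∀ x : EuclideanSpace ℝ (Fin d), ∑ k, c k * G k x = 0 := by
      intro x
      have h2 := congrFun (congrArg Subtype.val hc) x
      simpa [hG', AddSubmonoidClass.coe_finset_sum, Finset.sum_apply,
        Pi.smul_apply, smul_eq_mul] using h2
    set η : Fin (N + 1) × Fin n → (Fin d → ℂ) :=
      fun ki => rotV j0 j1 (θ ki.1) (ξ ki.2) with hη
    set s : Finset (Fin d → ℂ) := Finset.image η Finset.univ with hs
    set Pc : (Fin d → ℂ) → MvPolynomial (Fin d) ℂ := fun η₀ =>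
      ∑ ki ∈ Finset.univ.filter (fun ki => η ki = η₀),
        MvPolynomial.C (c ki.1) * substM (rotM j0 j1 (θ ki.1))ᵀ (p ki.2) with hPc
    have hterm : ∀ (x : Fin d → ℝ) (ki : Fin (N+1) × Fin n),
        Complex.exp (∑ j, η ki j * (x j : ℂ)) *
          MvPolynomial.eval (fun j => (x j : ℂ)) (substM (rotM j0 j1 (θ ki.1))ᵀ (p ki.2))
        = Complex.exp (∑ j, ξ ki.2 j * ((((rotM j0 j1 (θ ki.1))ᵀ).mulVec x) j : ℂ)) *
          MvPolynomial.eval (fun j => ((((rotM j0 j1 (θ ki.1))ᵀ).mulVec x) j : ℂ)) (p ki.2) := by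
      intro x ki
      rw [substM_eval, hη, freq_rot h01]
    have hH : ∀ x : Fin d → ℝ, ∑ η₀ ∈ s, Complex.exp (∑ j, η₀ j * (x j : ℂ)) *
        MvPolynomial.eval (fun j => (x j : ℂ)) (Pc η₀) = 0 := by
      intro x
      calc ∑ η₀ ∈ s, Complex.exp (∑ j, η₀ j * (x j : ℂ)) *
            MvPolynomial.eval (fun j => (x j : ℂ)) (Pc η₀)
          = ∑ η₀ ∈ s, ∑ ki ∈ Finset.univ.filter (fun ki => η ki = η₀),
              c ki.1 * (Complex.exp (∑ j, η ki j * (x j : ℂ)) *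
                MvPolynomial.eval (fun j => (x j : ℂ)) (substM (rotM j0 j1 (θ ki.1))ᵀ (p ki.2))) := by
            refine Finset.sum_congr rfl fun η₀ _ => ?_
            rw [hPc, map_sum, Finset.mul_sum]
            refine Finset.sum_congr rfl fun ki hki => ?_
            rw [← (Finset.mem_filter.mp hki).2, _root_.map_mul, MvPolynomial.eval_C]
            ring
        _ = ∑ ki : Fin (N+1) × Fin n, c ki.1 * (Complex.exp (∑ j, η ki j * (x j : ℂ)) *
              MvPolynomial.eval (fun j => (x j : ℂ)) (substM (rotM j0 j1 (θ ki.1))ᵀ (p ki.2))) :=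
            Finset.sum_fiberwise_of_maps_to (fun ki _ => Finset.mem_image_of_mem η (Finset.mem_univ ki)) _
        _ = ∑ k, c k * G k (WithLp.toLp 2 x) := by
            rw [Fintype.sum_prod_type]
            refine Finset.sum_congr rfl fun k _ => ?_
            rw [hG, hF, Finset.mul_sum]
            refine Finset.sum_congr rfl fun i _ => ?_
            rw [hterm x (k, i)]
        _ = 0 := hfun (WithLp.toLp 2 x)
    have hall := multi_dim_exp s Pc hH
    have hmem : η (k0, i0) ∈ s := Finset.mem_image_of_mem η (Finset.mem_univ _)
    have hkey := hall _ hmem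
    have hfilter : Finset.univ.filter (fun ki => η ki = η (k0, i0)) = {(k0, i0)} := by
      apply Finset.ext
      intro ki
      simp only [Finset.mem_filter, Finset.mem_univ, true_and, Finset.mem_singleton]
      constructor
      · intro hk
        rw [hη] at hk
        obtain ⟨h1, h2⟩ := hθ k0 ki.1 ki.2 hk.symm
        exact Prod.ext h1.symm h2
      · rintro rfl
        rfl
    rw [hPc] at hkey
    simp only [hfilter, Finset.sum_singleton] at hkey
    rcases mul_eq_zero.mp hkey with h | h
    · have := congrArg (MvPolynomial.coeff 0) h
      simpa using this
    · exact absurd h (substM_ne_zero (rotM_orth h01 (θ k0)) (hp i0))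
  have hcard := hli.fintype_card_le_finrank
  rw [Fintype.card_fin] at hcard
  omega
end

section
/- Let φ : K^d → ℝ be a translation-invariant valuation such that for all K₁,…,K_s ∈ K^d, the function (λ₁,…,λ_s) ↦ φ(Σ λ_i K_i) is a polynomial in λ_i ≥ 0 of degree at most d. Then φ decomposes uniquely as φ = Σ_{j=0}^d φ_j where each φ_j is a translation-invariant valuation homogeneous of degree j: φ_j(λK) = λ^j φ_j(K) for all λ ≥ 0, K ∈ K^d. -/
open Pointwise

/-- Nonempty compact convex subsets of ℝ^d. -/
def IsCC (d : ℕ) (K : Set (EuclideanSpace ℝ (Fin d))) : Prop :=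
  IsCompact K ∧ Convex ℝ K ∧ K.Nonempty

/-- Valuation property on nonempty compact convex subsets. -/
def IsVal (d : ℕ) (φ : Set (EuclideanSpace ℝ (Fin d)) → ℝ) : Prop :=
  ∀ K₁ K₂, IsCC d K₁ → IsCC d K₂ → Convex ℝ (K₁ ∪ K₂) →
    φ (K₁ ∪ K₂) + φ (K₁ ∩ K₂) = φ K₁ + φ K₂

/-- Translation invariance. -/
def TransInv (d : ℕ) (φ : Set (EuclideanSpace ℝ (Fin d)) → ℝ) : Prop :=
  ∀ K, IsCC d K → ∀ x : EuclideanSpace ℝ (Fin d), φ ((fun v => v + x) '' K) = φ K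

/-- Homogeneity of degree `j` (for nonnegative dilations). -/
def HomogDeg (d j : ℕ) (φ : Set (EuclideanSpace ℝ (Fin d)) → ℝ) : Prop :=
  ∀ K, IsCC d K → ∀ lam : ℝ, 0 ≤ lam → φ (lam • K) = lam ^ j * φ K

lemma aux_inter_nonempty {E : Type*} [NormedAddCommGroup E] [NormedSpace ℝ E]
    {K₁ K₂ : Set E} (hc₁ : IsCompact K₁) (hn₁ : K₁.Nonempty)
    (hc₂ : IsCompact K₂) (hn₂ : K₂.Nonempty) (hconv : Convex ℝ (K₁ ∪ K₂)) :
    (K₁ ∩ K₂).Nonempty := by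
  obtain ⟨x, hx⟩ := hn₁
  obtain ⟨y, hy⟩ := hn₂
  have hseg : segment ℝ x y ⊆ K₁ ∪ K₂ :=
    hconv.segment_subset (Set.mem_union_left _ hx) (Set.mem_union_right _ hy)
  have hpre : IsPreconnected (segment ℝ x y) := (convex_segment x y).isPreconnected
  have := isPreconnected_closed_iff.mp hpre K₁ K₂ hc₁.isClosed hc₂.isClosed hseg
    ⟨x, left_mem_segment ℝ x y, hx⟩ ⟨y, right_mem_segment ℝ x y, hy⟩
  exact this.mono Set.inter_subset_right

lemma aux_coeffs_unique {d : ℕ} {a b : ℕ → ℝ}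
    (h : ∀ t : ℝ, 0 ≤ t → ∑ j ∈ Finset.range (d+1), a j * t ^ j
        = ∑ j ∈ Finset.range (d+1), b j * t ^ j) :
    ∀ j ∈ Finset.range (d+1), a j = b j := by
  have hpq : (∑ j ∈ Finset.range (d+1), Polynomial.C (a j) * Polynomial.X ^ j)
      = ∑ j ∈ Finset.range (d+1), Polynomial.C (b j) * Polynomial.X ^ j := by
    apply Polynomial.eq_of_infinite_eval_eq
    refine Set.Infinite.mono ?_ (Set.Ici_infinite (0:ℝ))
    intro t ht
    simp only [Set.mem_setOf_eq, Polynomial.eval_finset_sum, Polynomial.eval_mul,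
      Polynomial.eval_C, Polynomial.eval_pow, Polynomial.eval_X]
    exact h t ht
  intro j hj
  have := congrArg (fun p => Polynomial.coeff p j) hpq
  simpa [Polynomial.finset_sum_coeff, Polynomial.coeff_C_mul, Polynomial.coeff_X_pow,
    Finset.sum_ite_eq, hj] using this

/-- McMullen's homogeneous decomposition: a translation-invariant valuation
`φ` on `K^d` such that `(λ₁,…,λ_s) ↦ φ(Σ λᵢKᵢ)` is a polynomial of degree at most `d`
decomposes uniquely as `φ = Σ_{j=0}^d φ_j` with each `φ_j` a translation-invariant
valuation homogeneous of degree `j`. -/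
theorem stmt12 (d : ℕ) (φ : Set (EuclideanSpace ℝ (Fin d)) → ℝ)
    (hval : IsVal d φ) (htrans : TransInv d φ)
    (hpoly : ∀ (s : ℕ) (Ks : Fin s → Set (EuclideanSpace ℝ (Fin d))),
      (∀ i, IsCC d (Ks i)) →
      ∃ p : MvPolynomial (Fin s) ℝ, p.totalDegree ≤ d ∧
        ∀ lam : Fin s → ℝ, (∀ i, 0 ≤ lam i) →
          φ (∑ i, lam i • Ks i) = MvPolynomial.eval lam p) :
    ∃ ψ : ℕ → Set (EuclideanSpace ℝ (Fin d)) → ℝ,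
      (∀ j ≤ d, IsVal d (ψ j) ∧ TransInv d (ψ j) ∧ HomogDeg d j (ψ j)) ∧
      (∀ K, IsCC d K → φ K = ∑ j ∈ Finset.range (d + 1), ψ j K) ∧
      (∀ ψ' : ℕ → Set (EuclideanSpace ℝ (Fin d)) → ℝ,
        (∀ j ≤ d, IsVal d (ψ' j) ∧ TransInv d (ψ' j) ∧ HomogDeg d j (ψ' j)) →
        (∀ K, IsCC d K → φ K = ∑ j ∈ Finset.range (d + 1), ψ' j K) →
        ∀ j ≤ d, ∀ K, IsCC d K → ψ' j K = ψ j K) := by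
  classical
  -- smul preserves IsCC
  have hsmulCC : ∀ (K : Set (EuclideanSpace ℝ (Fin d))), IsCC d K → ∀ lam : ℝ,
      IsCC d (lam • K) := by
    rintro K ⟨hc, hv, hne⟩ lam
    refine ⟨?_, hv.smul lam, hne.smul_set⟩
    rw [← Set.image_smul]
    exact hc.image (continuous_const_smul lam)
  -- one-variable polynomial behaviour
  have hq : ∀ K, IsCC d K → ∃ q : Polynomial ℝ, q.natDegree ≤ d ∧
      ∀ t : ℝ, 0 ≤ t → φ (t • K) = q.eval t := by
    intro K hK
    obtain ⟨p, hdeg, hev⟩ := hpoly 1 (fun _ => K) (fun _ => hK)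
    refine ⟨∑ m ∈ p.support, Polynomial.C (MvPolynomial.coeff m p) * Polynomial.X ^ (m 0),
      ?_, ?_⟩
    · refine Polynomial.natDegree_sum_le_of_forall_le _ _ (fun m hm => ?_)
      refine (Polynomial.natDegree_C_mul_X_pow_le _ _).trans
        (le_trans ?_ (le_trans (MvPolynomial.le_totalDegree hm) hdeg))
      rw [Finsupp.sum]
      by_cases h0 : m 0 = 0
      · simp [h0]
      · exact Finset.single_le_sum (fun i _ => Nat.zero_le _) (Finsupp.mem_support_iff.mpr h0)
    · intro t ht
      have h1 := hev (fun _ => t) (fun _ => ht)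
      rw [Fin.sum_univ_one] at h1
      rw [h1, MvPolynomial.eval_eq', Polynomial.eval_finset_sum]
      refine Finset.sum_congr rfl fun m hm => ?_
      simp [Fin.prod_univ_one]
  -- nodes
  set v : ℕ → ℝ := fun i => (i : ℝ) with hv
  have hvinj : Set.InjOn v (Finset.range (d+1)) := fun i _ j _ hij => Nat.cast_injective hij
  -- the candidate components
  set ψ : ℕ → Set (EuclideanSpace ℝ (Fin d)) → ℝ := fun j K =>
    (Lagrange.interpolate (Finset.range (d+1)) v (fun i => φ ((i : ℝ) • K))).coeff j with hψ
  -- key expansion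
  have hA : ∀ K, IsCC d K → ∀ t : ℝ, 0 ≤ t →
      φ (t • K) = ∑ j ∈ Finset.range (d+1), ψ j K * t ^ j := by
    intro K hK t ht
    obtain ⟨q, hqd, hqe⟩ := hq K hK
    have hdeg : q.degree < ((Finset.range (d+1)).card : WithBot ℕ) := by
      rw [Finset.card_range]
      exact lt_of_le_of_lt q.degree_le_natDegree
        (by exact_mod_cast Nat.lt_succ_of_le hqd)
    have heq : Lagrange.interpolate (Finset.range (d+1)) v (fun i => φ ((i : ℝ) • K)) = q := by
      have : (fun i : ℕ => φ ((i : ℝ) • K)) = fun i : ℕ => q.eval (v i) :=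
        funext fun i => hqe _ (Nat.cast_nonneg i)
      rw [this]
      exact (Lagrange.eq_interpolate hvinj hdeg).symm
    have hcoeff : ∀ j, ψ j K = q.coeff j := fun j => by rw [hψ]; simp only; rw [heq]
    rw [hqe t ht, Polynomial.eval_eq_sum_range' (Nat.lt_succ_of_le hqd)]
    exact Finset.sum_congr rfl fun j _ => by rw [hcoeff j]
  -- linear-combination representation of ψ
  have hrep : ∀ j K, ψ j K = ∑ i ∈ Finset.range (d+1),
      φ ((i : ℝ) • K) * (Lagrange.basis (Finset.range (d+1)) v i).coeff j := by
    intro j K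
    rw [hψ]
    simp only [Lagrange.interpolate_apply, Polynomial.finset_sum_coeff,
      Polynomial.coeff_C_mul]
  -- scaled valuation identity
  have hscale_val : ∀ (c : ℝ), 0 ≤ c → ∀ K₁ K₂, IsCC d K₁ → IsCC d K₂ →
      Convex ℝ (K₁ ∪ K₂) →
      φ (c • (K₁ ∪ K₂)) + φ (c • (K₁ ∩ K₂)) = φ (c • K₁) + φ (c • K₂) := by
    intro c hc K₁ K₂ h1 h2 hconv
    rcases hc.eq_or_lt with rfl | hpos
    · have hi : (K₁ ∩ K₂).Nonempty :=
        aux_inter_nonempty h1.1 h1.2.2 h2.1 h2.2.2 hconv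
      rw [Set.zero_smul_set (h1.2.2.mono Set.subset_union_left : (K₁ ∪ K₂).Nonempty),
        Set.zero_smul_set hi, Set.zero_smul_set h1.2.2, Set.zero_smul_set h2.2.2]
    · have hc0 : c ≠ 0 := ne_of_gt hpos
      rw [Set.smul_set_union, Set.smul_set_inter₀ hc0]
      exact hval _ _ (hsmulCC _ h1 c) (hsmulCC _ h2 c)
        (by rw [← Set.smul_set_union]; exact hconv.smul c)
  -- scaled translation identity
  have htransl : ∀ (c : ℝ) (K : Set (EuclideanSpace ℝ (Fin d)))
      (x : EuclideanSpace ℝ (Fin d)),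
      c • ((fun w => w + x) '' K) = (fun w => w + c • x) '' (c • K) := by
    intro c K x
    rw [← Set.image_smul, ← Set.image_smul, Set.image_image, Set.image_image]
    exact Set.image_congr' (fun w => by rw [smul_add])
  refine ⟨ψ, ?_, ?_, ?_⟩
  · -- properties of ψ j
    intro j hj
    refine ⟨?_, ?_, ?_⟩
    · -- valuation
      intro K₁ K₂ h1 h2 hconv
      simp only [hrep]
      rw [← Finset.sum_add_distrib, ← Finset.sum_add_distrib]
      refine Finset.sum_congr rfl fun i _ => ?_
      rw [← add_mul, ← add_mul, hscale_val (i : ℝ) (Nat.cast_nonneg i) K₁ K₂ h1 h2 hconv]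
    · -- translation invariance
      intro K hK x
      simp only [hrep]
      refine Finset.sum_congr rfl fun i _ => ?_
      congr 1
      rw [htransl (i : ℝ) K x]
      exact htrans _ (hsmulCC K hK (i : ℝ)) _
    · -- homogeneity
      intro K hK lam hlam
      have key : ∀ t : ℝ, 0 ≤ t →
          ∑ j' ∈ Finset.range (d+1), ψ j' (lam • K) * t ^ j'
            = ∑ j' ∈ Finset.range (d+1), (lam ^ j' * ψ j' K) * t ^ j' := by
        intro t ht
        rw [← hA (lam • K) (hsmulCC K hK lam) t ht]
        have h1 : t • lam • K = (t * lam) • K := smul_smul t lam K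
        rw [h1, hA K hK (t * lam) (mul_nonneg ht hlam)]
        refine Finset.sum_congr rfl fun j' _ => ?_
        rw [mul_pow]
        ring
      exact aux_coeffs_unique key j (Finset.mem_range.mpr (Nat.lt_succ_of_le hj))
  · -- decomposition
    intro K hK
    have := hA K hK 1 zero_le_one
    rw [one_smul] at this
    simpa using this
  · -- uniqueness
    intro ψ' hψ' hsum' j hj K hK
    have key : ∀ t : ℝ, 0 ≤ t →
        ∑ j' ∈ Finset.range (d+1), ψ' j' K * t ^ j'
          = ∑ j' ∈ Finset.range (d+1), ψ j' K * t ^ j' := by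
      intro t ht
      rw [← hA K hK t ht, hsum' (t • K) (hsmulCC K hK t)]
      refine Finset.sum_congr rfl fun j' hj' => ?_
      have hj'd : j' ≤ d := Nat.lt_succ_iff.mp (Finset.mem_range.mp hj')
      rw [(hψ' j' hj'd).2.2 K hK t ht]
      ring
    exact aux_coeffs_unique key j (Finset.mem_range.mpr (Nat.lt_succ_of_le hj))
end
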